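/- In the g₀-module V of the previous statement (H v_n = -2n v_n, E v_{-n} = (n+1/2)v_{-n-1} and F v_n = (n+1/2)v_{n+1} for n ≥ 0, E v_n = 0 and F v_{-n} = 0 for n > 0), the subspace W = span{v_n : n ≠ 0} is a submodule, the quotient V/W is one-dimensional with E, F, H all acting by zero, and W is the unique maximal proper submodule of V (i.e., every proper submodule is contained in W). -/

import Mathlib

/-- Operator on the free ℂ-module on basis `(v_n)_{n ∈ ℤ}` (encoded as `ℤ →₀ ℂ`)
sending `v_p` to `a p • v_(p+s)`. -/
noncomputable def sop (a : ℤ → ℂ) (s : ℤ) : Module.End ℂ (ℤ →₀ ℂ) :=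
  Finsupp.lsum ℂ fun p => a p • Finsupp.lsingle (p + s)

/-- `E v_m = (-m + 1/2) v_(m-1)` for `m ≤ 0`, and `E v_m = 0` for `m > 0`. -/
noncomputable def Eop : Module.End ℂ (ℤ →₀ ℂ) :=
  sop (fun m => if m ≤ 0 then -(m : ℂ) + 1 / 2 else 0) (-1)

/-- `F v_m = (m + 1/2) v_(m+1)` for `m ≥ 0`, and `F v_m = 0` for `m < 0`. -/
noncomputable def Fop : Module.End ℂ (ℤ →₀ ℂ) :=
  sop (fun m => if 0 ≤ m then (m : ℂ) + 1 / 2 else 0) 1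

/-- `H v_m = -2m v_m`. -/
noncomputable def Hop : Module.End ℂ (ℤ →₀ ℂ) := sop (fun m => -2 * (m : ℂ)) 0

/-- `W = span {v_n : n ≠ 0}`. -/
noncomputable def W : Submodule ℂ (ℤ →₀ ℂ) :=
  Submodule.span ℂ {f | ∃ n : ℤ, n ≠ 0 ∧ f = Finsupp.single n (1 : ℂ)}

/-! `W` is the kernel of the `v₀`-coefficient, and none of `E`, `F`, `H` produces a `v₀`-component.
For maximality: `H` is diagonal with pairwise distinct eigenvalues `-2n`, so an `H`-stable
submodule contains every weight component of each of its elements. A submodule not inside `W`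
therefore contains `v₀`, and since `n + 1/2 ≠ 0` for every integer `n`, `F` carries `v₀` up to
every `v_n` with `n ≥ 0` and `E` carries it down to every `v_n` with `n ≤ 0`. -/

lemma sop_apply (a : ℤ → ℂ) (s : ℤ) (x : ℤ →₀ ℂ) (k : ℤ) :
    sop a s x k = a (k - s) * x (k - s) := by
  classical
  rw [sop, Finsupp.lsum_apply, Finsupp.sum_apply, Finsupp.sum,
    Finset.sum_eq_single (k - s)]
  · simp
  · intro p _ hp
    simp [show p + s ≠ k by omega]
  · intro hk
    simp [Finsupp.notMem_support_iff.mp hk]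

lemma sop_single (a : ℤ → ℂ) (s n : ℤ) (c : ℂ) :
    sop a s (Finsupp.single n c) = Finsupp.single (n + s) (a n * c) := by
  rw [sop, Finsupp.lsum_single, LinearMap.smul_apply, Finsupp.lsingle_apply,
    Finsupp.smul_single']

lemma sop_mul_sop_zero (a b : ℤ → ℂ) : sop a 0 * sop b 0 = sop (a * b) 0 := by
  refine LinearMap.ext fun x => Finsupp.ext fun k => ?_
  simp only [Module.End.mul_apply, sop_apply, sub_zero, Pi.mul_apply]
  ring

lemma sop_sub_const_zero_apply (a : ℤ → ℂ) (c : ℂ) (x : ℤ →₀ ℂ) :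
    sop (fun k => a k - c) 0 x = sop a 0 x - c • x := by
  ext k
  simp only [sop_apply, sub_zero, Finsupp.coe_sub, Pi.sub_apply, Finsupp.coe_smul,
    Pi.smul_apply, smul_eq_mul]
  ring

section DiagonalInvariant

variable {a : ℤ → ℂ} {p : Submodule ℂ (ℤ →₀ ℂ)}

/-- `sop (fun k => ∏ m ∈ S, (a k - a m)) 0` is the operator `∏ m ∈ S, (D - a m)`
for `D = sop a 0`. -/
lemma sop_prod_sub_mem (hp : ∀ x ∈ p, sop a 0 x ∈ p) (S : Finset ℤ) {x : ℤ →₀ ℂ}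
    (hx : x ∈ p) : sop (fun k => ∏ m ∈ S, (a k - a m)) 0 x ∈ p := by
  classical
  induction S using Finset.induction_on generalizing x with
  | empty =>
    convert hx
    ext k
    simp [sop_apply]
  | insert m S hm ih =>
    have hfac : (fun k => ∏ i ∈ insert m S, (a k - a i)) =
        (fun k => a k - a m) * fun k => ∏ i ∈ S, (a k - a i) := by
      ext k; simp [Finset.prod_insert hm]
    rw [hfac, ← sop_mul_sop_zero, Module.End.mul_apply, sop_sub_const_zero_apply]
    exact p.sub_mem (hp _ (ih hx)) (p.smul_mem _ (ih hx))

lemma single_apply_mem_of_diagonal_invariant (ha : Function.Injective a)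
    (hp : ∀ x ∈ p, sop a 0 x ∈ p) {x : ℤ →₀ ℂ} (hx : x ∈ p) (n : ℤ) :
    Finsupp.single n (x n) ∈ p := by
  classical
  set S := x.support.erase n
  have hc : ∏ m ∈ S, (a n - a m) ≠ 0 :=
    Finset.prod_ne_zero_iff.mpr fun m hm =>
      sub_ne_zero.mpr (ha.ne (Finset.ne_of_mem_erase hm).symm)
  have hproj : sop (fun k => ∏ m ∈ S, (a k - a m)) 0 x =
      (∏ m ∈ S, (a n - a m)) • Finsupp.single n (x n) := by
    ext k
    rw [sop_apply, sub_zero, Finsupp.smul_apply, Finsupp.single_apply]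
    by_cases hkn : n = k
    · simp [hkn]
    by_cases hk : k ∈ x.support
    · rw [if_neg hkn, smul_zero,
        Finset.prod_eq_zero (Finset.mem_erase.mpr ⟨Ne.symm hkn, hk⟩) (sub_self (a k)), zero_mul]
    · simp [if_neg hkn, Finsupp.notMem_support_iff.mp hk]
  have := p.smul_mem (∏ m ∈ S, (a n - a m))⁻¹ (sop_prod_sub_mem hp S hx)
  rwa [hproj, inv_smul_smul₀ hc] at this

lemma single_one_mem_of_sop_invariant {s : ℤ} (hp : ∀ x ∈ p, sop a s x ∈ p) {n : ℤ}
    (hn : Finsupp.single n 1 ∈ p) (han : a n ≠ 0) : Finsupp.single (n + s) 1 ∈ p := by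
  have := p.smul_mem (a n)⁻¹ (hp _ hn)
  rwa [sop_single, Finsupp.smul_single', mul_one, inv_mul_cancel₀ han] at this

end DiagonalInvariant

lemma intCast_add_half_ne_zero (n : ℤ) : (n : ℂ) + 1 / 2 ≠ 0 := by
  intro h
  have : ((2 * n + 1 : ℤ) : ℂ) = 0 := by push_cast; linear_combination 2 * h
  have := Int.cast_eq_zero.mp this
  omega

lemma mem_W_iff (f : ℤ →₀ ℂ) : f ∈ W ↔ f 0 = 0 := by
  have hW : W = Finsupp.supported ℂ ℂ ({0}ᶜ : Set ℤ) := by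
    rw [Finsupp.supported_eq_span_single, W]
    congr 1
    ext f
    simp [eq_comm]
  rw [hW, Finsupp.mem_supported, Set.subset_compl_singleton_iff, Finset.mem_coe,
    Finsupp.notMem_support_iff]

lemma sop_mem_W {a : ℤ → ℂ} {s : ℤ} (h : a (-s) = 0) (x : ℤ →₀ ℂ) : sop a s x ∈ W := by
  rw [mem_W_iff, sop_apply, zero_sub, h, zero_mul]

lemma Eop_mem_W (x : ℤ →₀ ℂ) : Eop x ∈ W := sop_mem_W (by norm_num) x

lemma Fop_mem_W (x : ℤ →₀ ℂ) : Fop x ∈ W := sop_mem_W (by norm_num) x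

lemma Hop_mem_W (x : ℤ →₀ ℂ) : Hop x ∈ W := sop_mem_W (by norm_num) x

lemma W_eq_ker_lapply_zero : W = LinearMap.ker (Finsupp.lapply 0) := by
  ext f
  rw [mem_W_iff, LinearMap.mem_ker, Finsupp.lapply_apply]

lemma finrank_quotient_W : Module.finrank ℂ ((ℤ →₀ ℂ) ⧸ W) = 1 := by
  have hsurj : Function.Surjective (Finsupp.lapply (R := ℂ) (M := ℂ) (0 : ℤ)) :=
    fun c => ⟨Finsupp.single 0 c, by simp⟩
  rw [((Submodule.quotEquivOfEq _ _ W_eq_ker_lapply_zero).trans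
    ((Finsupp.lapply 0).quotKerEquivOfSurjective hsurj)).finrank_eq, Module.finrank_self]

lemma eq_top_of_forall_single_one_mem {p : Submodule ℂ (ℤ →₀ ℂ)}
    (h : ∀ n, Finsupp.single n (1 : ℂ) ∈ p) : p = ⊤ := by
  rw [eq_top_iff, ← Finsupp.supported_univ, Finsupp.supported_eq_span_single,
    Submodule.span_le]
  rintro _ ⟨n, -, rfl⟩
  exact h n

lemma eq_top_of_single_zero_mem {p : Submodule ℂ (ℤ →₀ ℂ)}
    (hE : ∀ x ∈ p, Eop x ∈ p) (hF : ∀ x ∈ p, Fop x ∈ p)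
    (h₀ : Finsupp.single 0 (1 : ℂ) ∈ p) : p = ⊤ := by
  refine eq_top_of_forall_single_one_mem fun n => ?_
  rcases le_total 0 n with hn | hn
  · induction n, hn using Int.leInduction with
    | base => exact h₀
    | succ n hn ih =>
      refine single_one_mem_of_sop_invariant hF ih ?_
      rw [if_pos hn]
      exact intCast_add_half_ne_zero n
  · induction n, hn using Int.leInductionDown with
    | base => exact h₀
    | pred n hn ih =>
      refine single_one_mem_of_sop_invariant hE ih ?_
      rw [if_pos hn]
      simpa using intCast_add_half_ne_zero (-n)

lemma le_W_of_invariant (p : Submodule ℂ (ℤ →₀ ℂ))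
    (hE : ∀ x ∈ p, Eop x ∈ p) (hF : ∀ x ∈ p, Fop x ∈ p) (hH : ∀ x ∈ p, Hop x ∈ p)
    (hne : p ≠ ⊤) : p ≤ W := by
  intro x hx
  by_contra hxW
  rw [mem_W_iff] at hxW
  have hHinj : Function.Injective fun m : ℤ => -2 * (m : ℂ) := fun m n h => by
    simpa using h
  have h₀ := p.smul_mem (x 0)⁻¹ (single_apply_mem_of_diagonal_invariant hHinj hH hx 0)
  rw [Finsupp.smul_single', inv_mul_cancel₀ hxW] at h₀
  exact hne (eq_top_of_single_zero_mem hE hF h₀)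

theorem contracted_principal_series_maximal_submodule :
    (∀ x ∈ W, Eop x ∈ W) ∧
    (∀ x ∈ W, Fop x ∈ W) ∧
    (∀ x ∈ W, Hop x ∈ W) ∧
    Module.finrank ℂ ((ℤ →₀ ℂ) ⧸ W) = 1 ∧
    (∀ x : ℤ →₀ ℂ, Eop x ∈ W) ∧
    (∀ x : ℤ →₀ ℂ, Fop x ∈ W) ∧
    (∀ x : ℤ →₀ ℂ, Hop x ∈ W) ∧
    (∀ p : Submodule ℂ (ℤ →₀ ℂ),
      (∀ x ∈ p, Eop x ∈ p) → (∀ x ∈ p, Fop x ∈ p) → (∀ x ∈ p, Hop x ∈ p) →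
      p ≠ ⊤ → p ≤ W) :=
  ⟨fun x _ => Eop_mem_W x, fun x _ => Fop_mem_W x, fun x _ => Hop_mem_W x,
    finrank_quotient_W, Eop_mem_W, Fop_mem_W, Hop_mem_W, le_W_of_invariant⟩
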